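/- arXiv:1004.2775 — 4 statements merged into one kernel-verified Lean document; each statement's English description precedes it below -/
import Mathlib

section
/- Let $n \ge 1$ and let $c \in \mathbb{R}^n$ satisfy $0 < |c| < \sqrt{2}$. Then there exist constants $k_1, k_2 > 0$ such that for every Schwartz function $u : \mathbb{R}^n \to \mathbb{R}$, $$k_1 \int_{\mathbb{R}^n} \bigl((\Delta u)^2 + |\nabla u|^2 + u^2\bigr)\,dx \;\le\; \int_{\mathbb{R}^n} \bigl((\Delta u)^2 - (c\cdot\nabla u)^2 + u^2\bigr)\,dx \;\le\; k_2 \int_{\mathbb{R}^n} \bigl((\Delta u)^2 + |\nabla u|^2 + u^2\bigr)\,dx.$$ -/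
open MeasureTheory

/-- The Laplacian of `u : ℝⁿ → ℝ` at a point, as the sum of second partial derivatives. -/
noncomputable def laplacian {n : ℕ} (u : EuclideanSpace ℝ (Fin n) → ℝ)
    (x : EuclideanSpace ℝ (Fin n)) : ℝ :=
  ∑ i : Fin n,
    fderiv ℝ (fun y => fderiv ℝ u y (EuclideanSpace.single i 1)) x (EuclideanSpace.single i 1)

/-- The directional derivative `c ⋅ ∇u` at a point. -/
noncomputable def cGrad {n : ℕ} (c : EuclideanSpace ℝ (Fin n))
    (u : EuclideanSpace ℝ (Fin n) → ℝ) (x : EuclideanSpace ℝ (Fin n)) : ℝ :=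
  ∑ i : Fin n, c i * fderiv ℝ u x (EuclideanSpace.single i 1)

/-- The squared norm of the gradient `|∇u|²` at a point. -/
noncomputable def gradSq {n : ℕ} (u : EuclideanSpace ℝ (Fin n) → ℝ)
    (x : EuclideanSpace ℝ (Fin n)) : ℝ :=
  ∑ i : Fin n, (fderiv ℝ u x (EuclideanSpace.single i 1)) ^ 2

open LineDeriv
open scoped SchwartzMap

/-!
Write `A = ∫ (Δu)²`, `B = ∫ |∇u|²`, `C = ∫ (c⋅∇u)²`, `D = ∫ u²`. Integrating by parts,
`B = -∫ u Δu`, so `2B ≤ A + D`; Cauchy–Schwarz gives `C ≤ |c|² B`. Hence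
`A - C + D ≥ (1 - |c|²/2)(A + D) ≥ (2 - |c|²)/3 · (A + B + D)`, which is positive exactly when
`|c|² < 2`, while `A - C + D ≤ A + B + D` is trivial.
-/

namespace SchwartzMap

section Integrability

variable {D : Type*} [NormedAddCommGroup D] [NormedSpace ℝ D] [MeasurableSpace D] [BorelSpace D]
  [SecondCountableTopology D] {μ : Measure D} [μ.HasTemperateGrowth]

theorem integrable_mul (f g : 𝓢(D, ℝ)) : Integrable (fun x ↦ f x * g x) μ :=
  (pairing (ContinuousLinearMap.mul ℝ ℝ) f g).integrable

theorem integrable_sq (f : 𝓢(D, ℝ)) : Integrable (fun x ↦ f x ^ 2) μ := by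
  simpa only [sq] using f.integrable_mul f

end Integrability

section Energy

open scoped Laplacian

variable {E ι : Type*} [NormedAddCommGroup E] [InnerProductSpace ℝ E] [FiniteDimensional ℝ E]
  [MeasurableSpace E] [BorelSpace E] {μ : Measure E} [μ.IsAddHaarMeasure] [Fintype ι]
  (b : OrthonormalBasis ι ℝ E) (u : 𝓢(E, ℝ))

theorem integral_sum_sq_lineDerivOp_eq_neg_integral_mul_laplacian :
    ∫ x, ∑ i, ∂_{b i} u x ^ 2 ∂μ = -∫ x, u x * Δ u x ∂μ := by
  have hparts (i : ι) : ∫ x, ∂_{b i} u x ^ 2 ∂μ = -∫ x, u x * ∂_{b i} (∂_{b i} u) x ∂μ := by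
    rw [integral_mul_lineDerivOp_right_eq_neg_left, neg_neg]
    simp only [sq]
  rw [integral_finsetSum _ fun i _ ↦ (∂_{b i} u).integrable_sq, laplacian_eq_sum b]
  simp only [_root_.sum_apply, Finset.mul_sum]
  rw [integral_finsetSum _ fun i _ ↦ u.integrable_mul _, ← Finset.sum_neg_distrib]
  exact Finset.sum_congr rfl fun i _ ↦ hparts i

theorem two_mul_integral_sum_sq_lineDerivOp_le :
    2 * ∫ x, ∑ i, ∂_{b i} u x ^ 2 ∂μ ≤ ∫ x, Δ u x ^ 2 ∂μ + ∫ x, u x ^ 2 ∂μ := by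
  rw [integral_sum_sq_lineDerivOp_eq_neg_integral_mul_laplacian, ← integral_neg,
    ← integral_const_mul, ← integral_add (Δ u).integrable_sq u.integrable_sq]
  refine integral_mono ((u.integrable_mul _).neg.const_mul _)
    ((Δ u).integrable_sq.add u.integrable_sq) fun x ↦ ?_
  dsimp only
  nlinarith [sq_nonneg (u x + Δ u x)]

end Energy

end SchwartzMap

section Euclidean

open scoped Laplacian

variable {n : ℕ}

theorem laplacian_schwartzMap (u : 𝓢(EuclideanSpace ℝ (Fin n), ℝ)) (x : EuclideanSpace ℝ (Fin n)) :
    laplacian u x = Δ u x := by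
  rw [SchwartzMap.laplacian_eq_sum (EuclideanSpace.basisFun (Fin n) ℝ), sum_apply]
  simp only [laplacian, EuclideanSpace.basisFun_apply, SchwartzMap.lineDerivOp_apply_eq_fderiv]
  rfl

theorem gradSq_schwartzMap (u : 𝓢(EuclideanSpace ℝ (Fin n), ℝ)) (x : EuclideanSpace ℝ (Fin n)) :
    gradSq u x = ∑ i, ∂_{EuclideanSpace.basisFun (Fin n) ℝ i} u x ^ 2 := by
  simp only [gradSq, EuclideanSpace.basisFun_apply, SchwartzMap.lineDerivOp_apply_eq_fderiv]

theorem cGrad_eq_fderiv (c : EuclideanSpace ℝ (Fin n)) (u : EuclideanSpace ℝ (Fin n) → ℝ)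
    (x : EuclideanSpace ℝ (Fin n)) : cGrad c u x = fderiv ℝ u x c := by
  conv_rhs => rw [← (EuclideanSpace.basisFun (Fin n) ℝ).sum_repr c]
  simp [cGrad, map_sum]

theorem cGrad_sq_le (c : EuclideanSpace ℝ (Fin n)) (u : EuclideanSpace ℝ (Fin n) → ℝ)
    (x : EuclideanSpace ℝ (Fin n)) : cGrad c u x ^ 2 ≤ ‖c‖ ^ 2 * gradSq u x := by
  rw [EuclideanSpace.real_norm_sq_eq]
  exact Finset.sum_mul_sq_le_sq_mul_sq _ _ _

theorem integrable_gradSq (u : 𝓢(EuclideanSpace ℝ (Fin n), ℝ)) :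
    Integrable (gradSq u) := by
  simp only [funext (gradSq_schwartzMap u)]
  exact integrable_finsetSum _ fun i _ ↦ SchwartzMap.integrable_sq (∂_{_} u)

theorem two_mul_integral_gradSq_le (u : 𝓢(EuclideanSpace ℝ (Fin n), ℝ)) :
    2 * ∫ x, gradSq u x ≤ (∫ x, laplacian u x ^ 2) + ∫ x, u x ^ 2 := by
  simp only [gradSq_schwartzMap, laplacian_schwartzMap]
  exact SchwartzMap.two_mul_integral_sum_sq_lineDerivOp_le _ u

theorem integrable_laplacian_sq (u : 𝓢(EuclideanSpace ℝ (Fin n), ℝ)) :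
    Integrable (fun x ↦ laplacian u x ^ 2) := by
  simpa only [laplacian_schwartzMap] using (Δ u).integrable_sq

theorem integrable_cGrad_sq (c : EuclideanSpace ℝ (Fin n)) (u : 𝓢(EuclideanSpace ℝ (Fin n), ℝ)) :
    Integrable (fun x ↦ cGrad c u x ^ 2) := by
  simpa only [cGrad_eq_fderiv] using (∂_{c} u).integrable_sq

theorem integral_cGrad_sq_le (c : EuclideanSpace ℝ (Fin n)) (u : 𝓢(EuclideanSpace ℝ (Fin n), ℝ)) :
    ∫ x, cGrad c u x ^ 2 ≤ ‖c‖ ^ 2 * ∫ x, gradSq u x := by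
  rw [← integral_const_mul]
  exact integral_mono (integrable_cGrad_sq c u) ((integrable_gradSq u).const_mul _)
    (cGrad_sq_le c u)

theorem integral_laplacian_sq_add_gradSq_add_sq (u : 𝓢(EuclideanSpace ℝ (Fin n), ℝ)) :
    ∫ x, (laplacian u x ^ 2 + gradSq u x + u x ^ 2) =
      (∫ x, laplacian u x ^ 2) + (∫ x, gradSq u x) + ∫ x, u x ^ 2 := by
  rw [integral_add (f := fun x ↦ laplacian u x ^ 2 + gradSq u x)
    ((integrable_laplacian_sq u).add (integrable_gradSq u)) u.integrable_sq,
    integral_add (integrable_laplacian_sq u) (integrable_gradSq u)]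

theorem integral_laplacian_sq_sub_cGrad_sq_add_sq (c : EuclideanSpace ℝ (Fin n))
    (u : 𝓢(EuclideanSpace ℝ (Fin n), ℝ)) :
    ∫ x, (laplacian u x ^ 2 - cGrad c u x ^ 2 + u x ^ 2) =
      (∫ x, laplacian u x ^ 2) - (∫ x, cGrad c u x ^ 2) + ∫ x, u x ^ 2 := by
  rw [integral_add (f := fun x ↦ laplacian u x ^ 2 - cGrad c u x ^ 2)
    ((integrable_laplacian_sq u).sub (integrable_cGrad_sq c u)) u.integrable_sq,
    integral_sub (integrable_laplacian_sq u) (integrable_cGrad_sq c u)]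

end Euclidean

theorem stmt_1_general (n : ℕ) (c : EuclideanSpace ℝ (Fin n))
    (hc2 : ‖c‖ < Real.sqrt 2) :
    ∃ k₁ k₂ : ℝ, 0 < k₁ ∧ 0 < k₂ ∧
      ∀ u : SchwartzMap (EuclideanSpace ℝ (Fin n)) ℝ,
        k₁ * ∫ x, ((laplacian u x) ^ 2 + gradSq u x + (u x) ^ 2) ≤
            ∫ x, ((laplacian u x) ^ 2 - (cGrad c u x) ^ 2 + (u x) ^ 2) ∧
          ∫ x, ((laplacian u x) ^ 2 - (cGrad c u x) ^ 2 + (u x) ^ 2) ≤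
            k₂ * ∫ x, ((laplacian u x) ^ 2 + gradSq u x + (u x) ^ 2) := by
  have hc : ‖c‖ ^ 2 < 2 := (Real.lt_sqrt (norm_nonneg c)).1 hc2
  refine ⟨(2 - ‖c‖ ^ 2) / 3, 1, by linarith, one_pos, fun u ↦ ?_⟩
  rw [integral_laplacian_sq_add_gradSq_add_sq, integral_laplacian_sq_sub_cGrad_sq_add_sq]
  have hB : 0 ≤ ∫ x, gradSq u x := integral_nonneg fun x ↦ Finset.sum_nonneg fun i _ ↦ sq_nonneg _
  have hC : 0 ≤ ∫ x, cGrad c u x ^ 2 := integral_nonneg fun x ↦ sq_nonneg _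
  have hBAD := two_mul_integral_gradSq_le u
  have hCB := integral_cGrad_sq_le c u
  constructor
  · nlinarith [mul_nonneg (by positivity : (0 : ℝ) ≤ 1 + ‖c‖ ^ 2) (by linarith : (0 : ℝ) ≤
      (∫ x, laplacian u x ^ 2) + (∫ x, u x ^ 2) - 2 * ∫ x, gradSq u x)]
  · linarith

theorem stmt_1 (n : ℕ) (hn : 1 ≤ n) (c : EuclideanSpace ℝ (Fin n))
    (hc0 : 0 < ‖c‖) (hc2 : ‖c‖ < Real.sqrt 2) :
    ∃ k₁ k₂ : ℝ, 0 < k₁ ∧ 0 < k₂ ∧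
      ∀ u : SchwartzMap (EuclideanSpace ℝ (Fin n)) ℝ,
        k₁ * ∫ x, ((laplacian u x) ^ 2 + gradSq u x + (u x) ^ 2) ≤
            ∫ x, ((laplacian u x) ^ 2 - (cGrad c u x) ^ 2 + (u x) ^ 2) ∧
          ∫ x, ((laplacian u x) ^ 2 - (cGrad c u x) ^ 2 + (u x) ^ 2) ≤
            k₂ * ∫ x, ((laplacian u x) ^ 2 + gradSq u x + (u x) ^ 2) :=
  stmt_1_general n c hc2
end

section
/- Let $n \ge 1$, let $c \in \mathbb{R}^n$ satisfy $0 < |c| < \sqrt{2}$, and let $f : \mathbb{R} \to \mathbb{R}$ satisfy $|f(u)| \le C_1 |u|^q$ for all $u \in \mathbb{R}$, for some constants $C_1 > 0$ and $q > 1$ (with $q < \frac{n+4}{n-4}$ if $n > 4$). Then for every Schwartz function $w : \mathbb{R}^n \to \mathbb{R}$ that is not identically zero, there exists $A_0 > 0$ such that $P_c(A w) > 0$ for all $0 < A < A_0$, where $$P_c(u) = \int_{\mathbb{R}^n} (\Delta u)^2 - (c\cdot\nabla u)^2 + u^2 \,dx + \int_{\mathbb{R}^n} u\,f(u) \,dx.$$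 -/
open MeasureTheory

/-- The Nehari functional `P_c`. -/
noncomputable def Pc {n : ℕ} (c : EuclideanSpace ℝ (Fin n)) (f : ℝ → ℝ)
    (u : EuclideanSpace ℝ (Fin n) → ℝ) : ℝ :=
  (∫ x, ((laplacian u x) ^ 2 - (cGrad c u x) ^ 2 + (u x) ^ 2)) + ∫ x, u x * f (u x)

/-!
Integrating by parts, `∑ᵢ ∫ (∂ᵢw)² = -∫ w Δw ≤ (∫ w² + ∫ (Δw)²) / 2`, and by Cauchy–Schwarz
`(c ⋅ ∇w)² ≤ |c|² ∑ᵢ (∂ᵢw)²` pointwise. Hence the quadratic part of `P_c(w)` is at least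
`(1 - |c|² / 2) (∫ w² + ∫ (Δw)²) > 0`. It scales like `A²` under `w ↦ A w`, whereas the growth
bound on `f` makes the nonlinear term at most `C₁ A^(q+1) ∫ |w|^(q+1)`, which is smaller for small
`A > 0` because `q + 1 > 2`.
-/

open scoped Laplacian LineDeriv SchwartzMap

theorem ContinuousLinearMap.sq_apply_le_norm_sq_mul_sum_sq {E ι : Type*} [NormedAddCommGroup E]
    [InnerProductSpace ℝ E] [Fintype ι] (L : E →L[ℝ] ℝ) (b : OrthonormalBasis ι ℝ E) (c : E) :
    L c ^ 2 ≤ ‖c‖ ^ 2 * ∑ i, L (b i) ^ 2 := by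
  conv_lhs => rw [← b.sum_repr' c]
  simp only [map_sum, map_smul, smul_eq_mul]
  rw [← b.sum_sq_inner_right c]
  exact Finset.sum_mul_sq_le_sq_mul_sq _ _ _

namespace SchwartzMap

variable {D : Type*} [NormedAddCommGroup D] [InnerProductSpace ℝ D] [FiniteDimensional ℝ D]
  [MeasurableSpace D] {μ : Measure D}

variable (μ) in
noncomputable def quadraticPart (c : D) (u : 𝓢(D, ℝ)) : ℝ :=
  ∫ x, Δ u x ^ 2 - ∂_{c} u x ^ 2 + u x ^ 2 ∂μ

theorem quadraticPart_smul (c : D) (A : ℝ) (u : 𝓢(D, ℝ)) :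
    (A • u).quadraticPart μ c = A ^ 2 * u.quadraticPart μ c := by
  rw [quadraticPart, quadraticPart, ← integral_const_mul]
  congr 1 with x
  rw [← laplacianCLM_eq' (A • u), map_smul, laplacianCLM_eq', LineDeriv.lineDerivOp_smul]
  simp only [smul_apply, smul_eq_mul]
  ring

variable [BorelSpace D] [μ.IsAddHaarMeasure]

theorem integrable_mul_apply (u v : 𝓢(D, ℝ)) : Integrable (fun x => u x * v x) μ :=
  (u.memLp 2 μ).integrable_mul (v.memLp 2 μ)

theorem integrable_sq_apply (u : 𝓢(D, ℝ)) : Integrable (fun x => u x ^ 2) μ :=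
  (u.memLp 2 μ).integrable_sq

theorem integrable_abs_rpow (u : 𝓢(D, ℝ)) {p : ℝ} (hp : 0 < p) :
    Integrable (fun x => |u x| ^ p) μ := by
  simpa [ENNReal.toReal_ofReal hp.le] using
    (u.memLp (ENNReal.ofReal p) μ).integrable_norm_rpow (by simpa using hp) ENNReal.ofReal_ne_top

theorem integral_sq_pos {u : 𝓢(D, ℝ)} (hu : u ≠ 0) : 0 < ∫ x, u x ^ 2 ∂μ := by
  have hsupp : (Function.support fun x => u x ^ 2) = Function.support u := by
    ext x; simp
  rw [integral_pos_iff_support_of_nonneg (fun x => sq_nonneg (u x)) u.integrable_sq_apply, hsupp]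
  refine u.continuous.isOpen_support.measure_pos μ ?_
  rw [Function.support_nonempty_iff]
  exact fun h => hu (ext (congrFun h))

theorem neg_integral_mul_le (u v : 𝓢(D, ℝ)) :
    -∫ x, u x * v x ∂μ ≤ (∫ x, u x ^ 2 ∂μ + ∫ x, v x ^ 2 ∂μ) / 2 := by
  rw [← integral_neg, ← integral_add u.integrable_sq_apply v.integrable_sq_apply, ← integral_div]
  refine integral_mono (u.integrable_mul_apply v).neg
    ((u.integrable_sq_apply.add v.integrable_sq_apply).div_const 2) fun x => ?_
  have := sq_nonneg (u x + v x)
  dsimp only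
  linarith

theorem sum_integral_lineDerivOp_sq {ι : Type*} [Fintype ι] (b : OrthonormalBasis ι ℝ D)
    (u : 𝓢(D, ℝ)) : ∑ i, ∫ x, ∂_{b i} u x ^ 2 ∂μ = -∫ x, u x * Δ u x ∂μ := by
  rw [laplacian_eq_sum b]
  simp only [sum_apply, Finset.mul_sum]
  rw [integral_finsetSum _ fun i _ => u.integrable_mul_apply _, ← Finset.sum_neg_distrib]
  refine Finset.sum_congr rfl fun i _ => ?_
  rw [integral_mul_lineDerivOp_right_eq_neg_left, neg_neg]
  simp only [sq]

theorem integral_lineDerivOp_sq_le (c : D) (u : 𝓢(D, ℝ)) :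
    ∫ x, ∂_{c} u x ^ 2 ∂μ ≤ ‖c‖ ^ 2 / 2 * (∫ x, u x ^ 2 ∂μ + ∫ x, Δ u x ^ 2 ∂μ) := by
  let b := stdOrthonormalBasis ℝ D
  have hpt (x : D) : ∂_{c} u x ^ 2 ≤ ‖c‖ ^ 2 * ∑ i, ∂_{b i} u x ^ 2 := by
    simpa only [lineDerivOp_apply_eq_fderiv] using
      (fderiv ℝ u x).sq_apply_le_norm_sq_mul_sum_sq b c
  have hint : Integrable (fun x => ‖c‖ ^ 2 * ∑ i, ∂_{b i} u x ^ 2) μ :=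
    (integrable_finsetSum _ fun i _ => (∂_{b i} u).integrable_sq_apply).const_mul _
  calc ∫ x, ∂_{c} u x ^ 2 ∂μ ≤ ∫ x, ‖c‖ ^ 2 * ∑ i, ∂_{b i} u x ^ 2 ∂μ :=
        integral_mono (∂_{c} u).integrable_sq_apply hint hpt
    _ = ‖c‖ ^ 2 * -∫ x, u x * Δ u x ∂μ := by
        rw [integral_const_mul, integral_finsetSum _ fun i _ => (∂_{b i} u).integrable_sq_apply,
          u.sum_integral_lineDerivOp_sq b]
    _ ≤ ‖c‖ ^ 2 * ((∫ x, u x ^ 2 ∂μ + ∫ x, Δ u x ^ 2 ∂μ) / 2) := by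
        gcongr
        exact u.neg_integral_mul_le (Δ u)
    _ = ‖c‖ ^ 2 / 2 * (∫ x, u x ^ 2 ∂μ + ∫ x, Δ u x ^ 2 ∂μ) := by ring

theorem quadraticPart_eq (c : D) (u : 𝓢(D, ℝ)) :
    u.quadraticPart μ c = ∫ x, Δ u x ^ 2 ∂μ - ∫ x, ∂_{c} u x ^ 2 ∂μ + ∫ x, u x ^ 2 ∂μ := by
  rw [quadraticPart, integral_add ((Δ u).integrable_sq_apply.sub (∂_{c} u).integrable_sq_apply)
    u.integrable_sq_apply, integral_sub (Δ u).integrable_sq_apply (∂_{c} u).integrable_sq_apply]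

theorem quadraticPart_pos {c : D} (hc : ‖c‖ ^ 2 < 2) {u : 𝓢(D, ℝ)} (hu : u ≠ 0) :
    0 < u.quadraticPart μ c := by
  have hu₂ : 0 < ∫ x, u x ^ 2 ∂μ := integral_sq_pos hu
  have hΔu₂ : 0 ≤ ∫ x, Δ u x ^ 2 ∂μ := integral_nonneg fun x => sq_nonneg _
  have hcu₂ := u.integral_lineDerivOp_sq_le c (μ := μ)
  rw [quadraticPart_eq]
  nlinarith

end SchwartzMap

theorem abs_integral_mul_comp_le {α : Type*} [MeasurableSpace α] {μ : Measure α}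
    {f : ℝ → ℝ} {C₁ q : ℝ} (hf : ∀ u, |f u| ≤ C₁ * |u| ^ q) (hq : q + 1 ≠ 0) {g : α → ℝ}
    (hg : Integrable (fun x => |g x| ^ (q + 1)) μ) :
    |∫ x, g x * f (g x) ∂μ| ≤ C₁ * ∫ x, |g x| ^ (q + 1) ∂μ := by
  have hpt (x : α) : ‖g x * f (g x)‖ ≤ C₁ * |g x| ^ (q + 1) := by
    rw [Real.norm_eq_abs, abs_mul, Real.rpow_add_one' (abs_nonneg _) hq]
    calc |g x| * |f (g x)| ≤ |g x| * (C₁ * |g x| ^ q) := by gcongr; exact hf _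
      _ = C₁ * (|g x| ^ q * |g x|) := by ring
  rw [← Real.norm_eq_abs, ← integral_const_mul]
  exact norm_integral_le_of_norm_le (hg.const_mul C₁) (ae_of_all _ hpt)

theorem exists_pos_forall_mul_rpow_lt_mul_rpow {Q K p r : ℝ} (hQ : 0 < Q) (hpr : p < r) :
    ∃ A₀ > 0, ∀ A : ℝ, 0 < A → A < A₀ → K * A ^ r < Q * A ^ p := by
  have hcont : ContinuousAt (fun A : ℝ => K * A ^ (r - p)) 0 :=
    continuousAt_const.mul (Real.continuousAt_rpow_const 0 _ (Or.inr (sub_pos.2 hpr).le))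
  have hlt : ∀ᶠ A in nhds 0, K * A ^ (r - p) < Q := by
    refine hcont.eventually_lt continuousAt_const ?_
    rwa [Real.zero_rpow (sub_pos.2 hpr).ne', mul_zero]
  obtain ⟨A₀, hA₀, hball⟩ := Metric.eventually_nhds_iff.1 hlt
  refine ⟨A₀, hA₀, fun A hA hAA₀ => ?_⟩
  have hsmall := hball (show dist A 0 < A₀ by rwa [Real.dist_0_eq_abs, abs_of_pos hA])
  have hsplit : A ^ r = A ^ (r - p) * A ^ p := by rw [← Real.rpow_add hA, sub_add_cancel]
  rw [hsplit, ← mul_assoc]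
  exact mul_lt_mul_of_pos_right hsmall (Real.rpow_pos_of_pos hA p)

section Euclidean

variable {n : ℕ}

theorem SchwartzMap.laplacian_apply_eq_laplacian (u : 𝓢(EuclideanSpace ℝ (Fin n), ℝ)) (x) :
    Δ u x = laplacian u x := by
  have hfd (v : 𝓢(EuclideanSpace ℝ (Fin n), ℝ)) (e) : (fun y => fderiv ℝ v y e) = ∂_{e} v :=
    funext fun y => (lineDerivOp_apply_eq_fderiv e v y).symm
  rw [laplacian_eq_sum (EuclideanSpace.basisFun (Fin n) ℝ), sum_apply, laplacian]
  simp only [EuclideanSpace.basisFun_apply, hfd, lineDerivOp_apply_eq_fderiv]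

theorem SchwartzMap.lineDerivOp_apply_eq_cGrad (c : EuclideanSpace ℝ (Fin n))
    (u : 𝓢(EuclideanSpace ℝ (Fin n), ℝ)) (x) : ∂_{c} u x = cGrad c u x := by
  conv_lhs => rw [← (EuclideanSpace.basisFun (Fin n) ℝ).sum_repr c]
  simp [cGrad, lineDerivOp_apply_eq_fderiv]

theorem Pc_eq_quadraticPart_add (c : EuclideanSpace ℝ (Fin n)) (f : ℝ → ℝ)
    (u : 𝓢(EuclideanSpace ℝ (Fin n), ℝ)) :
    Pc c f u = u.quadraticPart volume c + ∫ x, u x * f (u x) := by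
  simp only [Pc, SchwartzMap.quadraticPart, SchwartzMap.laplacian_apply_eq_laplacian,
    SchwartzMap.lineDerivOp_apply_eq_cGrad]

end Euclidean

theorem stmt_7_general (n : ℕ) (c : EuclideanSpace ℝ (Fin n))
    (hc2 : ‖c‖ < Real.sqrt 2) (f : ℝ → ℝ)
    (C₁ q : ℝ) (hq : 1 < q)
    (hf : ∀ u : ℝ, |f u| ≤ C₁ * |u| ^ q)
    (w : SchwartzMap (EuclideanSpace ℝ (Fin n)) ℝ) (hw : w ≠ 0) :
    ∃ A₀ : ℝ, 0 < A₀ ∧ ∀ A : ℝ, 0 < A → A < A₀ →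
      0 < Pc c f (fun x => A * w x) := by
  have hc : ‖c‖ ^ 2 < 2 := (Real.lt_sqrt (norm_nonneg c)).1 hc2
  set M := ∫ x, |w x| ^ (q + 1)
  obtain ⟨A₀, hA₀, hsmall⟩ := exists_pos_forall_mul_rpow_lt_mul_rpow (K := C₁ * M)
    (w.quadraticPart_pos hc hw (μ := volume)) (show (2 : ℝ) < q + 1 by linarith)
  refine ⟨A₀, hA₀, fun A hA hAA₀ => ?_⟩
  have hscale : ∫ x, |(A • w) x| ^ (q + 1) = A ^ (q + 1) * M := by
    simp only [smul_apply, smul_eq_mul, abs_mul, abs_of_pos hA,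
      Real.mul_rpow hA.le (abs_nonneg _)]
    exact integral_const_mul _ _
  have hnonlin := abs_integral_mul_comp_le hf (by linarith)
    ((A • w).integrable_abs_rpow (by linarith : (0 : ℝ) < q + 1) (μ := volume))
  have hdom := hsmall A hA hAA₀
  rw [Real.rpow_two] at hdom
  rw [hscale] at hnonlin
  show 0 < Pc c f ⇑(A • w)
  rw [Pc_eq_quadraticPart_add, SchwartzMap.quadraticPart_smul]
  linarith [(abs_le.1 hnonlin).1]

theorem stmt_7 (n : ℕ) (hn : 1 ≤ n) (c : EuclideanSpace ℝ (Fin n))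
    (hc0 : 0 < ‖c‖) (hc2 : ‖c‖ < Real.sqrt 2) (f : ℝ → ℝ)
    (C₁ q : ℝ) (hC₁ : 0 < C₁) (hq : 1 < q) (hqn : n > 4 → q < ((n : ℝ) + 4) / ((n : ℝ) - 4))
    (hf : ∀ u : ℝ, |f u| ≤ C₁ * |u| ^ q)
    (w : SchwartzMap (EuclideanSpace ℝ (Fin n)) ℝ) (hw : w ≠ 0) :
    ∃ A₀ : ℝ, 0 < A₀ ∧ ∀ A : ℝ, 0 < A → A < A₀ →
      0 < Pc c f (fun x => A * w x) :=
  stmt_7_general n c hc2 f C₁ q hq hf w hw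
end

section
/- Let $n \ge 1$, let $1 < \alpha < \beta < \gamma < \infty$, and let $C_\alpha, C_\beta, C_\gamma > 0$. Then there exist constants $\epsilon > 0$ and $C_0 > 0$ (depending only on $n$, $\alpha$, $\beta$, $\gamma$, $C_\alpha$, $C_\beta$, $C_\gamma$) such that every measurable function $f : \mathbb{R}^n \to \mathbb{R}$ satisfying $\|f\|_{L^\alpha(\mathbb{R}^n)} \le C_\alpha$, $\|f\|_{L^\beta(\mathbb{R}^n)} \ge C_\beta$, and $\|f\|_{L^\gamma(\mathbb{R}^n)} \le C_\gamma$ also satisfies $$\mu\bigl(\{x \in \mathbb{R}^n : |f(x)| \ge \epsilon\}\bigr) \ge C_0,$$ where $\mu$ denotes Lebesgue measure on $\mathbb{R}^n$. -/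
/-!
Split `ℝⁿ` according to the size of `|f|`. Where `|f| < ε` we have `|f|^β ≤ ε^(β-α) |f|^α`, and
where `|f| > M` we have `|f|^β ≤ M^(β-γ) |f|^γ`; the `L^α` and `L^γ` bounds make both contributions
to `‖f‖_β^β` at most a third of `C_β^β` once `ε` is small and `M` is large. The remaining third has
to come from the set `{ε ≤ |f| ≤ M}`, where `|f|^β ≤ M^β`, so this set has measure at least
`C_β^β / (3 M^β)`.
-/

open MeasureTheory Filter Topology
open scoped ENNReal

namespace Real

lemma rpow_le_mul_rpow_of_le {t ε α β : ℝ} (ht : 0 ≤ t) (htε : t ≤ ε) (hα : 0 ≤ α)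
    (hαβ : α ≤ β) : t ^ β ≤ ε ^ (β - α) * t ^ α :=
  calc t ^ β = t ^ (β - α) * t ^ α := by
        rw [← rpow_add_of_nonneg ht (sub_nonneg.2 hαβ) hα, sub_add_cancel]
    _ ≤ ε ^ (β - α) * t ^ α := by gcongr

lemma rpow_le_mul_rpow_of_ge {t M β γ : ℝ} (hM : 0 < M) (hMt : M ≤ t) (hβγ : β ≤ γ) :
    t ^ β ≤ M ^ (β - γ) * t ^ γ :=
  calc t ^ β = t ^ (β - γ) * t ^ γ := by rw [← rpow_add (hM.trans_le hMt), sub_add_cancel]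
    _ ≤ M ^ (β - γ) * t ^ γ :=
      mul_le_mul_of_nonneg_right (rpow_le_rpow_of_nonpos hM hMt (sub_nonpos.2 hβγ))
        (rpow_nonneg (hM.le.trans hMt) γ)

end Real

namespace ENNReal

lemma exists_pos_ofReal_rpow_mul_lt {p : ℝ} (hp : 0 < p) {A c : ℝ≥0∞} (hA : A ≠ ∞)
    (hc : 0 < c) : ∃ ε : ℝ, 0 < ε ∧ ENNReal.ofReal (ε ^ p) * A < c := by
  have hlim : Tendsto (fun ε : ℝ ↦ ENNReal.ofReal (ε ^ p) * A) (𝓝 0) (𝓝 0) := by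
    have h := (ENNReal.continuous_ofReal.comp (Real.continuous_rpow_const hp.le)).tendsto 0
    simp only [Function.comp_def, Real.zero_rpow hp.ne', ENNReal.ofReal_zero] at h
    simpa using ENNReal.Tendsto.mul_const h (Or.inr hA)
  have hsmall :=
    (hlim.eventually (gt_mem_nhds hc)).filter_mono (nhdsWithin_le_nhds (s := Set.Ioi 0))
  exact (eventually_mem_nhdsWithin.and hsmall).exists

lemma exists_pos_ofReal_rpow_neg_mul_lt {p : ℝ} (hp : 0 < p) {A c : ℝ≥0∞} (hA : A ≠ ∞)
    (hc : 0 < c) : ∃ M : ℝ, 0 < M ∧ ENNReal.ofReal (M ^ (-p)) * A < c := by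
  have hlim : Tendsto (fun M : ℝ ↦ ENNReal.ofReal (M ^ (-p)) * A) atTop (𝓝 0) := by
    have h := (ENNReal.continuous_ofReal.tendsto 0).comp (tendsto_rpow_neg_atTop hp)
    simpa using ENNReal.Tendsto.mul_const h (Or.inr hA)
  exact ((eventually_gt_atTop 0).and (hlim.eventually (gt_mem_nhds hc))).exists

lemma third_le_of_le_third_add_add_third {B K : ℝ≥0∞} (hB : B ≠ ∞)
    (h : B ≤ B / 3 + K + B / 3) : B / 3 ≤ K := by
  have hB3 : B / 3 ≠ ∞ := ENNReal.div_ne_top hB (by norm_num)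
  rw [← ENNReal.add_le_add_iff_right hB3, ← ENNReal.add_le_add_iff_left hB3]
  calc B / 3 + (B / 3 + B / 3) = B := by rw [← add_assoc, ENNReal.add_thirds]
    _ ≤ B / 3 + K + B / 3 := h
    _ = B / 3 + (K + B / 3) := add_assoc _ _ _

end ENNReal

section LevelSet

variable {X E : Type*} [MeasurableSpace X] {μ : Measure X} [NormedAddCommGroup E] {f : X → E}

lemma eLpNorm_ofReal_le_iff {p : ℝ} (hp : 0 < p) {c : ℝ≥0∞} :
    eLpNorm f (ENNReal.ofReal p) μ ≤ c ↔ ∫⁻ x, ‖f x‖ₑ ^ p ∂μ ≤ c ^ p := by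
  rw [eLpNorm_eq_eLpNorm' (by simpa using hp) ENNReal.ofReal_ne_top,
    ENNReal.toReal_ofReal hp.le, eLpNorm', one_div, ENNReal.rpow_inv_le_iff hp]

lemma le_eLpNorm_ofReal_iff {p : ℝ} (hp : 0 < p) {c : ℝ≥0∞} :
    c ≤ eLpNorm f (ENNReal.ofReal p) μ ↔ c ^ p ≤ ∫⁻ x, ‖f x‖ₑ ^ p ∂μ := by
  rw [eLpNorm_eq_eLpNorm' (by simpa using hp) ENNReal.ofReal_ne_top,
    ENNReal.toReal_ofReal hp.le, eLpNorm', one_div, ENNReal.le_rpow_inv_iff hp]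

lemma enorm_rpow_le_split {α β γ ε M : ℝ} (hα : 0 ≤ α) (hαβ : α ≤ β) (hβγ : β ≤ γ)
    (hM : 0 < M) (y : E) :
    ‖y‖ₑ ^ β ≤ ENNReal.ofReal (ε ^ (β - α)) * ‖y‖ₑ ^ α
      + {z : E | ε ≤ ‖z‖}.indicator (fun _ ↦ ENNReal.ofReal (M ^ β)) y
      + ENNReal.ofReal (M ^ (β - γ)) * ‖y‖ₑ ^ γ := by
  have ht := norm_nonneg y
  have hβ : 0 ≤ β := hα.trans hαβ
  rw [← ofReal_norm, ENNReal.ofReal_rpow_of_nonneg ht hα, ENNReal.ofReal_rpow_of_nonneg ht hβ,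
    ENNReal.ofReal_rpow_of_nonneg ht (hβ.trans hβγ)]
  rcases lt_or_ge ‖y‖ ε with hsmall | hlarge
  · refine le_add_right (le_add_right ?_)
    rw [← ENNReal.ofReal_mul (Real.rpow_nonneg (ht.trans hsmall.le) _)]
    exact ENNReal.ofReal_le_ofReal (Real.rpow_le_mul_rpow_of_le ht hsmall.le hα hαβ)
  rcases le_or_gt ‖y‖ M with hmid | hhuge
  · refine le_add_right (le_add_left ?_)
    rw [Set.indicator_of_mem (show y ∈ {z : E | ε ≤ ‖z‖} from hlarge)]
    exact ENNReal.ofReal_le_ofReal (Real.rpow_le_rpow ht hmid hβ)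
  · refine le_add_left ?_
    rw [← ENNReal.ofReal_mul (Real.rpow_nonneg hM.le _)]
    exact ENNReal.ofReal_le_ofReal (Real.rpow_le_mul_rpow_of_ge hM hhuge.le hβγ)

lemma lintegral_enorm_rpow_le_split (hf : AEStronglyMeasurable f μ) {α β γ ε M : ℝ}
    (hα : 0 ≤ α) (hαβ : α ≤ β) (hβγ : β ≤ γ) (hM : 0 < M) :
    ∫⁻ x, ‖f x‖ₑ ^ β ∂μ ≤ ENNReal.ofReal (ε ^ (β - α)) * ∫⁻ x, ‖f x‖ₑ ^ α ∂μ
      + ENNReal.ofReal (M ^ β) * μ {x | ε ≤ ‖f x‖}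
      + ENNReal.ofReal (M ^ (β - γ)) * ∫⁻ x, ‖f x‖ₑ ^ γ ∂μ := by
  set S := {x | ε ≤ ‖f x‖}
  calc ∫⁻ x, ‖f x‖ₑ ^ β ∂μ
      ≤ ∫⁻ x, (ENNReal.ofReal (ε ^ (β - α)) * ‖f x‖ₑ ^ α
          + S.indicator (fun _ ↦ ENNReal.ofReal (M ^ β)) x
          + ENNReal.ofReal (M ^ (β - γ)) * ‖f x‖ₑ ^ γ) ∂μ :=
        lintegral_mono fun x ↦ enorm_rpow_le_split hα hαβ hβγ hM (f x)
    _ = ENNReal.ofReal (ε ^ (β - α)) * ∫⁻ x, ‖f x‖ₑ ^ α ∂μ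
          + ∫⁻ x, S.indicator (fun _ ↦ ENNReal.ofReal (M ^ β)) x ∂μ
          + ENNReal.ofReal (M ^ (β - γ)) * ∫⁻ x, ‖f x‖ₑ ^ γ ∂μ := by
        rw [lintegral_add_right' _ ((hf.enorm.pow_const γ).const_mul _),
          lintegral_add_left' ((hf.enorm.pow_const α).const_mul _),
          lintegral_const_mul' _ _ ENNReal.ofReal_ne_top,
          lintegral_const_mul' _ _ ENNReal.ofReal_ne_top]
    _ ≤ _ := by gcongr; exact lintegral_indicator_const_le S _

variable (μ) in
theorem exists_measure_le_norm_of_lintegral_rpow_bounds {α β γ : ℝ} (hα : 0 ≤ α)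
    (hαβ : α < β) (hβγ : β < γ) {A B G : ℝ≥0∞} (hA : A ≠ ∞) (hB₀ : B ≠ 0) (hB : B ≠ ∞)
    (hG : G ≠ ∞) :
    ∃ ε C₀ : ℝ, 0 < ε ∧ 0 < C₀ ∧ ∀ f : X → E, AEStronglyMeasurable f μ →
      ∫⁻ x, ‖f x‖ₑ ^ α ∂μ ≤ A → B ≤ ∫⁻ x, ‖f x‖ₑ ^ β ∂μ → ∫⁻ x, ‖f x‖ₑ ^ γ ∂μ ≤ G →
      ENNReal.ofReal C₀ ≤ μ {x | ε ≤ ‖f x‖} := by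
  have hB3 : 0 < B / 3 := ENNReal.div_pos hB₀ (by norm_num)
  obtain ⟨ε, hε, hεA⟩ := ENNReal.exists_pos_ofReal_rpow_mul_lt (sub_pos.2 hαβ) hA hB3
  obtain ⟨M, hM, hMG⟩ := ENNReal.exists_pos_ofReal_rpow_neg_mul_lt (sub_pos.2 hβγ) hG hB3
  rw [neg_sub] at hMG
  have hMβ : ENNReal.ofReal (M ^ β) ≠ 0 := by
    simpa using Real.rpow_pos_of_pos hM β
  have hC₀ : B / 3 / ENNReal.ofReal (M ^ β) ≠ ∞ :=
    ENNReal.div_ne_top (ENNReal.div_ne_top hB (by norm_num)) hMβ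
  refine ⟨ε, (B / 3 / ENNReal.ofReal (M ^ β)).toReal, hε,
    ENNReal.toReal_pos (ENNReal.div_pos hB3.ne' ENNReal.ofReal_ne_top).ne' hC₀,
    fun f hf hfα hfβ hfγ ↦ ?_⟩
  have hsplit := lintegral_enorm_rpow_le_split hf hα hαβ.le hβγ.le hM (ε := ε)
  have hthird : B / 3 ≤ ENNReal.ofReal (M ^ β) * μ {x | ε ≤ ‖f x‖} := by
    refine ENNReal.third_le_of_le_third_add_add_third hB (hfβ.trans (hsplit.trans ?_))
    gcongr
    · exact (mul_le_mul_right hfα _).trans hεA.le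
    · exact (mul_le_mul_right hfγ _).trans hMG.le
  rw [ENNReal.ofReal_toReal hC₀]
  exact ENNReal.div_le_of_le_mul' hthird

end LevelSet

theorem stmt_8_general (n : ℕ) (α β γ : ℝ) (hα : 1 < α) (hαβ : α < β) (hβγ : β < γ)
    (Cα Cβ Cγ : ℝ) (hCβ : 0 < Cβ) :
    ∃ ε C₀ : ℝ, 0 < ε ∧ 0 < C₀ ∧
      ∀ f : EuclideanSpace ℝ (Fin n) → ℝ, Measurable f →
        eLpNorm f (ENNReal.ofReal α) volume ≤ ENNReal.ofReal Cα →
        ENNReal.ofReal Cβ ≤ eLpNorm f (ENNReal.ofReal β) volume →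
        eLpNorm f (ENNReal.ofReal γ) volume ≤ ENNReal.ofReal Cγ →
        ENNReal.ofReal C₀ ≤ volume {x : EuclideanSpace ℝ (Fin n) | ε ≤ |f x|} := by
  have hα₀ : 0 < α := zero_lt_one.trans hα
  have hβ₀ : 0 < β := hα₀.trans hαβ
  have hγ₀ : 0 < γ := hβ₀.trans hβγ
  obtain ⟨ε, C₀, hε, hC₀, hlevel⟩ :=
    exists_measure_le_norm_of_lintegral_rpow_bounds (E := ℝ)
      (volume : Measure (EuclideanSpace ℝ (Fin n))) hα₀.le hαβ hβγ
      (ENNReal.rpow_ne_top_of_nonneg hα₀.le (ENNReal.ofReal_ne_top (r := Cα)))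
      (ENNReal.rpow_pos (ENNReal.ofReal_pos.2 hCβ) ENNReal.ofReal_ne_top).ne'
      (ENNReal.rpow_ne_top_of_nonneg hβ₀.le (ENNReal.ofReal_ne_top (r := Cβ)))
      (ENNReal.rpow_ne_top_of_nonneg hγ₀.le (ENNReal.ofReal_ne_top (r := Cγ)))
  refine ⟨ε, C₀, hε, hC₀, fun f hf hfα hfβ hfγ ↦ ?_⟩
  simpa only [Real.norm_eq_abs] using hlevel f hf.aestronglyMeasurable
    ((eLpNorm_ofReal_le_iff hα₀).1 hfα) ((le_eLpNorm_ofReal_iff hβ₀).1 hfβ)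
    ((eLpNorm_ofReal_le_iff hγ₀).1 hfγ)

theorem stmt_8 (n : ℕ) (hn : 1 ≤ n) (α β γ : ℝ) (hα : 1 < α) (hαβ : α < β) (hβγ : β < γ)
    (Cα Cβ Cγ : ℝ) (hCα : 0 < Cα) (hCβ : 0 < Cβ) (hCγ : 0 < Cγ) :
    ∃ ε C₀ : ℝ, 0 < ε ∧ 0 < C₀ ∧
      ∀ f : EuclideanSpace ℝ (Fin n) → ℝ, Measurable f →
        eLpNorm f (ENNReal.ofReal α) volume ≤ ENNReal.ofReal Cα →
        ENNReal.ofReal Cβ ≤ eLpNorm f (ENNReal.ofReal β) volume →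
        eLpNorm f (ENNReal.ofReal γ) volume ≤ ENNReal.ofReal Cγ →
        ENNReal.ofReal C₀ ≤ volume {x : EuclideanSpace ℝ (Fin n) | ε ≤ |f x|} :=
  stmt_8_general n α β γ hα hαβ hβγ Cα Cβ Cγ hCβ
end

section
/- Let $n \ge 1$, $p \ge 1$, $C > 0$, and let $H : \mathbb{R} \to \mathbb{R}$ satisfy $H(0) = 0$ and $|H(u) - H(v)| \le C(|u|^p + |v|^p)|u - v|$ for all $u, v \in \mathbb{R}$. Let $z \in L^{p+1}(\mathbb{R}^n)$ and let $(z_k)_{k \ge 1}$ be a sequence in $L^{p+1}(\mathbb{R}^n)$ with $\sup_k \|z_k\|_{L^{p+1}(\mathbb{R}^n)} < \infty$ such that $z_k \to z$ strongly in $L^{p+1}(K)$ for every compact set $K \subset \mathbb{R}^n$. Then $$\lim_{k \to \infty} \int_{\mathbb{R}^n} \bigl(H(z_k(x)) - H(z_k(x) - z(x)) - H(z(x))\bigr) \,dx = 0.$$ -/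
/-!
Write `g = H(u) - H(u - v) - H(v)` and `w = max(|u|, |v|)`. The growth condition gives both
`|g| ≤ C (2 + 2^p) w^p |v|` and `|g| ≤ C (2 + 2^p) w^p |u - v|`, and Hölder's inequality with
exponents `(p + 1)/p` and `p + 1` turns `w^p` into the uniformly bounded factor `‖w‖_{p+1}^p`.
For `u = z_k`, `v = z`, use the second bound on a large ball `B`, where `z_k → z` in `L^{p+1}(B)`,
and the first one on its complement, where the tail of `‖z‖_{p+1}` is small uniformly in `k`.
-/

open MeasureTheory Filter Topology

def IsPowerLipschitz (H : ℝ → ℝ) (C p : ℝ) : Prop :=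
  ∀ u v : ℝ, |H u - H v| ≤ C * (|u| ^ p + |v| ^ p) * |u - v|

lemma abs_rpow_add_abs_rpow_add_abs_sub_rpow_le {p : ℝ} (hp : 0 ≤ p) (u v : ℝ) :
    |u| ^ p + |v| ^ p + |u - v| ^ p ≤ (2 + 2 ^ p) * max |u| |v| ^ p := by
  have hu : |u| ^ p ≤ max |u| |v| ^ p := by gcongr; exact le_max_left _ _
  have hv : |v| ^ p ≤ max |u| |v| ^ p := by gcongr; exact le_max_right _ _
  have huv : |u - v| ^ p ≤ 2 ^ p * max |u| |v| ^ p := by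
    rw [← Real.mul_rpow zero_le_two (by positivity)]
    gcongr
    calc |u - v| ≤ |u| + |v| := abs_sub _ _
      _ ≤ 2 * max |u| |v| := by linarith [le_max_left |u| |v|, le_max_right |u| |v|]
  linarith

lemma max_rpow_le_add_rpow {a b r : ℝ} (ha : 0 ≤ a) (hb : 0 ≤ b) :
    max a b ^ r ≤ a ^ r + b ^ r := by
  rcases le_total a b with h | h
  · rw [max_eq_right h]; linarith [Real.rpow_nonneg ha r]
  · rw [max_eq_left h]; linarith [Real.rpow_nonneg hb r]

namespace IsPowerLipschitz

variable {H : ℝ → ℝ} {C p : ℝ}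

lemma coeff_nonneg (hH : IsPowerLipschitz H C p) (hp : 0 < p) : 0 ≤ C := by
  have h := hH 1 0
  simp only [abs_one, Real.one_rpow, abs_zero, Real.zero_rpow hp.ne', add_zero, mul_one,
    sub_zero] at h
  exact (abs_nonneg _).trans h

lemma continuous (hH : IsPowerLipschitz H C p) (hp : 0 < p) : Continuous H := by
  refine continuous_iff_continuousAt.2 fun u => tendsto_iff_norm_sub_tendsto_zero.2 ?_
  have hbound : Continuous fun v : ℝ => C * (|v| ^ p + |u| ^ p) * |v - u| := by
    have := hp.le
    fun_prop (disch := assumption)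
  refine squeeze_zero (fun _ => norm_nonneg _) (fun v => hH v u) ?_
  simpa using hbound.tendsto u

lemma abs_le_mul (hH : IsPowerLipschitz H C p) (hp : 0 < p) (hH0 : H 0 = 0) (u : ℝ) :
    |H u| ≤ C * |u| ^ p * |u| := by
  simpa [hH0, Real.zero_rpow hp.ne'] using hH u 0

lemma abs_splitting_le_mul_abs_right (hH : IsPowerLipschitz H C p) (hp : 0 < p) (hH0 : H 0 = 0)
    (u v : ℝ) :
    |H u - H (u - v) - H v| ≤ C * (2 + 2 ^ p) * max |u| |v| ^ p * |v| :=
  calc |H u - H (u - v) - H v| ≤ |H u - H (u - v)| + |H v| := abs_sub _ _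
    _ ≤ C * (|u| ^ p + |u - v| ^ p) * |v| + C * |v| ^ p * |v| := by
        gcongr
        · simpa using hH u (u - v)
        · exact hH.abs_le_mul hp hH0 v
    _ = C * |v| * (|u| ^ p + |v| ^ p + |u - v| ^ p) := by ring
    _ ≤ C * |v| * ((2 + 2 ^ p) * max |u| |v| ^ p) :=
        mul_le_mul_of_nonneg_left (abs_rpow_add_abs_rpow_add_abs_sub_rpow_le hp.le u v)
          (mul_nonneg (hH.coeff_nonneg hp) (abs_nonneg v))
    _ = C * (2 + 2 ^ p) * max |u| |v| ^ p * |v| := by ring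

lemma abs_splitting_le_mul_abs_sub (hH : IsPowerLipschitz H C p) (hp : 0 < p) (hH0 : H 0 = 0)
    (u v : ℝ) :
    |H u - H (u - v) - H v| ≤ C * (2 + 2 ^ p) * max |u| |v| ^ p * |u - v| :=
  calc |H u - H (u - v) - H v| ≤ |H u - H v| + |H (u - v)| := by
        rw [sub_right_comm]; exact abs_sub _ _
    _ ≤ C * (|u| ^ p + |v| ^ p) * |u - v| + C * |u - v| ^ p * |u - v| :=
        add_le_add (hH u v) (hH.abs_le_mul hp hH0 _)
    _ = C * |u - v| * (|u| ^ p + |v| ^ p + |u - v| ^ p) := by ring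
    _ ≤ C * |u - v| * ((2 + 2 ^ p) * max |u| |v| ^ p) :=
        mul_le_mul_of_nonneg_left (abs_rpow_add_abs_rpow_add_abs_sub_rpow_le hp.le u v)
          (mul_nonneg (hH.coeff_nonneg hp) (abs_nonneg _))
    _ = C * (2 + 2 ^ p) * max |u| |v| ^ p * |u - v| := by ring

end IsPowerLipschitz

lemma Real.holderConjugate_add_one_div_self {p : ℝ} (hp : 0 < p) :
    Real.HolderConjugate ((p + 1) / p) (p + 1) := by
  rw [Real.holderConjugate_iff]
  constructor
  · rw [lt_div_iff₀ hp]; linarith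
  · field_simp

section Lp

variable {α : Type*} [MeasurableSpace α] {μ : Measure α} {p : ℝ}

lemma MeasureTheory.MemLp.integrable_abs_rpow {f : α → ℝ} (hp : 0 < p)
    (hf : MemLp f (ENNReal.ofReal p) μ) : Integrable (fun x => |f x| ^ p) μ := by
  simpa [ENNReal.toReal_ofReal hp.le] using
    hf.integrable_norm_rpow (by simpa using hp) ENNReal.ofReal_ne_top

lemma MeasureTheory.MemLp.abs_rpow_add_one_div {f : α → ℝ} (hp : 0 < p)
    (hf : MemLp f (ENNReal.ofReal (p + 1)) μ) :
    MemLp (fun x => |f x| ^ p) (ENNReal.ofReal ((p + 1) / p)) μ := by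
  have h := hf.norm_rpow_div (ENNReal.ofReal p)
  rwa [ENNReal.toReal_ofReal hp.le, ← ENNReal.ofReal_div_of_pos hp] at h

lemma integrable_abs_rpow_mul_abs {f g : α → ℝ} (hp : 0 < p)
    (hf : MemLp f (ENNReal.ofReal (p + 1)) μ) (hg : MemLp g (ENNReal.ofReal (p + 1)) μ) :
    Integrable (fun x => |f x| ^ p * |g x|) μ := by
  have := (Real.holderConjugate_add_one_div_self hp).ennrealOfReal
  rw [← memLp_one_iff_integrable]
  exact hg.abs.mul' (hf.abs_rpow_add_one_div hp)

lemma integral_abs_rpow_mul_abs_le {f g : α → ℝ} (hp : 0 < p)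
    (hf : MemLp f (ENNReal.ofReal (p + 1)) μ) (hg : MemLp g (ENNReal.ofReal (p + 1)) μ) :
    ∫ x, |f x| ^ p * |g x| ∂μ ≤
      (∫ x, |f x| ^ (p + 1) ∂μ) ^ (p / (p + 1)) * (∫ x, |g x| ^ (p + 1) ∂μ) ^ (1 / (p + 1)) := by
  have h := integral_mul_le_Lp_mul_Lq_of_nonneg (Real.holderConjugate_add_one_div_self hp)
    (ae_of_all _ fun x => by positivity) (ae_of_all _ fun x => abs_nonneg (g x))
    (hf.abs_rpow_add_one_div hp) hg.abs
  have hpow : ∀ x, (|f x| ^ p) ^ ((p + 1) / p) = |f x| ^ (p + 1) := fun x => by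
    rw [← Real.rpow_mul (abs_nonneg _), mul_div_cancel₀ _ hp.ne']
  simpa only [hpow, one_div_div] using h

lemma setIntegral_abs_le_of_abs_le_rpow_mul {G f b : α → ℝ} {K : ℝ} (hK : 0 ≤ K) (hp : 0 < p)
    (hf : MemLp f (ENNReal.ofReal (p + 1)) μ) (hb : MemLp b (ENNReal.ofReal (p + 1)) μ)
    (hG : ∀ x, |G x| ≤ K * |f x| ^ p * |b x|) (s : Set α) :
    ∫ x in s, |G x| ∂μ ≤
      K * (∫ x, |f x| ^ (p + 1) ∂μ) ^ (p / (p + 1)) *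
        (∫ x in s, |b x| ^ (p + 1) ∂μ) ^ (1 / (p + 1)) :=
  calc ∫ x in s, |G x| ∂μ ≤ ∫ x in s, K * (|f x| ^ p * |b x|) ∂μ :=
        integral_mono_of_nonneg (ae_of_all _ fun x => abs_nonneg _)
          ((integrable_abs_rpow_mul_abs hp hf hb).restrict.const_mul K)
          (ae_of_all _ fun x => (hG x).trans_eq (mul_assoc _ _ _))
    _ = K * ∫ x in s, |f x| ^ p * |b x| ∂μ := integral_const_mul _ _
    _ ≤ K * ((∫ x in s, |f x| ^ (p + 1) ∂μ) ^ (p / (p + 1)) *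
          (∫ x in s, |b x| ^ (p + 1) ∂μ) ^ (1 / (p + 1))) := by
        gcongr
        exact integral_abs_rpow_mul_abs_le hp (hf.restrict s) (hb.restrict s)
    _ ≤ K * (∫ x, |f x| ^ (p + 1) ∂μ) ^ (p / (p + 1)) *
          (∫ x in s, |b x| ^ (p + 1) ∂μ) ^ (1 / (p + 1)) := by
        have hrestrict : (∫ x in s, |f x| ^ (p + 1) ∂μ) ^ (p / (p + 1)) ≤
            (∫ x, |f x| ^ (p + 1) ∂μ) ^ (p / (p + 1)) := by
          refine Real.rpow_le_rpow (setIntegral_nonneg_of_ae (ae_of_all _ fun x => by positivity))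
            ?_ (by positivity)
          exact setIntegral_le_integral (hf.integrable_abs_rpow (by linarith))
            (ae_of_all _ fun x => by positivity)
        rw [← mul_assoc]
        exact mul_le_mul_of_nonneg_right (mul_le_mul_of_nonneg_left hrestrict hK) (by positivity)

end Lp

namespace IsPowerLipschitz

variable {α : Type*} [MeasurableSpace α] {μ : Measure α} {H : ℝ → ℝ} {C p : ℝ}

lemma integrable_comp (hH : IsPowerLipschitz H C p) (hp : 0 < p) (hH0 : H 0 = 0) {f : α → ℝ}
    (hf : MemLp f (ENNReal.ofReal (p + 1)) μ) : Integrable (fun x => H (f x)) μ := by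
  refine ((hf.integrable_abs_rpow (by linarith)).const_mul C).mono'
    ((hH.continuous hp).comp_aestronglyMeasurable hf.1) (ae_of_all _ fun x => ?_)
  rw [Real.norm_eq_abs, Real.rpow_add_one' (abs_nonneg _) (by linarith), ← mul_assoc]
  exact hH.abs_le_mul hp hH0 (f x)

lemma integral_abs_splitting_le (hH : IsPowerLipschitz H C p) (hp : 0 < p) (hH0 : H 0 = 0)
    {u v : α → ℝ} (hu : MemLp u (ENNReal.ofReal (p + 1)) μ)
    (hv : MemLp v (ENNReal.ofReal (p + 1)) μ) {s : Set α} (hs : MeasurableSet s) {Λ : ℝ}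
    (hΛ : ∫ x, |u x| ^ (p + 1) ∂μ + ∫ x, |v x| ^ (p + 1) ∂μ ≤ Λ) :
    ∫ x, |H (u x) - H (u x - v x) - H (v x)| ∂μ ≤
      C * (2 + 2 ^ p) * Λ ^ (p / (p + 1)) *
        ((∫ x in s, |u x - v x| ^ (p + 1) ∂μ) ^ (1 / (p + 1)) +
          (∫ x in sᶜ, |v x| ^ (p + 1) ∂μ) ^ (1 / (p + 1))) := by
  have hp1 : 0 < p + 1 := by linarith
  have hK : 0 ≤ C * (2 + 2 ^ p) := mul_nonneg (hH.coeff_nonneg hp) (by positivity)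
  set w : α → ℝ := fun x => max |u x| |v x|
  have hw_abs (x : α) : |w x| = w x := abs_of_nonneg ((abs_nonneg _).trans (le_max_left _ _))
  have hwLp : MemLp w (ENNReal.ofReal (p + 1)) μ := hu.abs.sup hv.abs
  have hwΛ : (∫ x, |w x| ^ (p + 1) ∂μ) ^ (p / (p + 1)) ≤ Λ ^ (p / (p + 1)) := by
    refine Real.rpow_le_rpow (integral_nonneg fun x => by positivity) ?_ (by positivity)
    rw [← integral_add (hu.integrable_abs_rpow hp1) (hv.integrable_abs_rpow hp1)] at hΛ
    refine le_trans (integral_mono (hwLp.integrable_abs_rpow hp1)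
      ((hu.integrable_abs_rpow hp1).add (hv.integrable_abs_rpow hp1)) fun x => ?_) hΛ
    rw [hw_abs]
    exact max_rpow_le_add_rpow (abs_nonneg _) (abs_nonneg _)
  have hint : Integrable (fun x => |H (u x) - H (u x - v x) - H (v x)|) μ :=
    (((hH.integrable_comp hp hH0 hu).sub (hH.integrable_comp hp hH0 (hu.sub hv))).sub
      (hH.integrable_comp hp hH0 hv)).abs
  rw [← integral_add_compl hs hint, mul_add]
  gcongr
  · refine (setIntegral_abs_le_of_abs_le_rpow_mul hK hp hwLp (hu.sub hv) (fun x => ?_) s).trans ?_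
    · rw [hw_abs]; exact hH.abs_splitting_le_mul_abs_sub hp hH0 _ _
    · exact mul_le_mul_of_nonneg_right (mul_le_mul_of_nonneg_left hwΛ hK) (by positivity)
  · refine (setIntegral_abs_le_of_abs_le_rpow_mul hK hp hwLp hv (fun x => ?_) sᶜ).trans ?_
    · rw [hw_abs]; exact hH.abs_splitting_le_mul_abs_right hp hH0 _ _
    · exact mul_le_mul_of_nonneg_right (mul_le_mul_of_nonneg_left hwΛ hK) (by positivity)

end IsPowerLipschitz

lemma tendsto_setIntegral_compl_closedBall {X : Type*} [PseudoMetricSpace X] [MeasurableSpace X]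
    [OpensMeasurableSpace X] {μ : Measure X} {F : X → ℝ} (hF : Integrable F μ) (x₀ : X) :
    Tendsto (fun m : ℕ => ∫ x in (Metric.closedBall x₀ m)ᶜ, F x ∂μ) atTop (𝓝 0) := by
  have h := tendsto_setIntegral_of_antitone (μ := μ) (f := F)
    (s := fun m : ℕ => (Metric.closedBall x₀ m)ᶜ) (fun _ => measurableSet_closedBall.compl)
    (fun _ _ hmk => Set.compl_subset_compl.2
      (Metric.closedBall_subset_closedBall (Nat.cast_le.2 hmk))) ⟨0, hF.integrableOn⟩
  rwa [← Set.compl_iUnion, Metric.iUnion_closedBall_nat, Set.compl_univ,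
    Measure.restrict_empty, integral_zero_measure] at h

lemma tendsto_const_mul_rpow_nhds_zero {ι : Type*} {l : Filter ι} {f : ι → ℝ} (c : ℝ) {r : ℝ}
    (hr : 0 < r) (hf : Tendsto f l (𝓝 0)) : Tendsto (fun i => c * f i ^ r) l (𝓝 0) := by
  simpa [Real.zero_rpow hr.ne'] using (hf.rpow_const (Or.inr hr.le)).const_mul c

lemma tendsto_nhds_zero_of_abs_le_add {ι κ : Type*} {l : Filter ι} {l' : Filter κ} [l'.NeBot]
    {a : ι → ℝ} {b : κ → ι → ℝ} {δ : κ → ℝ} (hδ : Tendsto δ l' (𝓝 0))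
    (hb : ∀ m, Tendsto (b m) l (𝓝 0)) (h : ∀ m i, |a i| ≤ b m i + δ m) :
    Tendsto a l (𝓝 0) := by
  refine Metric.tendsto_nhds.2 fun ε hε => ?_
  obtain ⟨m, hm⟩ := (hδ.eventually (gt_mem_nhds (half_pos hε))).exists
  filter_upwards [(hb m).eventually (gt_mem_nhds (half_pos hε))] with i hi
  rw [Real.dist_0_eq_abs]
  linarith [h m i]

theorem stmt_10_general (n : ℕ) (p C : ℝ) (hp : 1 ≤ p)
    (H : ℝ → ℝ) (hH0 : H 0 = 0)
    (hH : ∀ u v : ℝ, |H u - H v| ≤ C * (|u| ^ p + |v| ^ p) * |u - v|)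
    (z : EuclideanSpace ℝ (Fin n) → ℝ)
    (hz : MemLp z (ENNReal.ofReal (p + 1)) volume)
    (zk : ℕ → EuclideanSpace ℝ (Fin n) → ℝ)
    (hzk : ∀ k, MemLp (zk k) (ENNReal.ofReal (p + 1)) volume)
    (hbdd : ∃ M : ℝ, ∀ k, (∫ x, |zk k x| ^ (p + 1)) ^ (1 / (p + 1)) ≤ M)
    (hloc : ∀ K : Set (EuclideanSpace ℝ (Fin n)), IsCompact K →
      Filter.Tendsto (fun k => ∫ x in K, |zk k x - z x| ^ (p + 1))
        Filter.atTop (nhds 0)) :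
    Filter.Tendsto
      (fun k => ∫ x, (H (zk k x) - H (zk k x - z x) - H (z x)))
      Filter.atTop (nhds 0) := by
  obtain ⟨M, hM⟩ := hbdd
  have hp0 : 0 < p := by linarith
  have hexp : 0 < 1 / (p + 1) := by positivity
  have hzk_le (k : ℕ) : ∫ x, |zk k x| ^ (p + 1) ≤ M ^ (p + 1) := by
    have h0 : 0 ≤ ∫ x, |zk k x| ^ (p + 1) := integral_nonneg fun x => by positivity
    simpa only [← Real.rpow_mul h0, one_div_mul_cancel (by linarith : p + 1 ≠ 0),
      Real.rpow_one] using Real.rpow_le_rpow (by positivity) (hM k) (by linarith : 0 ≤ p + 1)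
  set c := C * (2 + 2 ^ p) * (M ^ (p + 1) + ∫ x, |z x| ^ (p + 1)) ^ (p / (p + 1))
  refine tendsto_nhds_zero_of_abs_le_add (l' := atTop)
    (tendsto_const_mul_rpow_nhds_zero c hexp
      (tendsto_setIntegral_compl_closedBall (hz.integrable_abs_rpow (by linarith)) 0))
    (fun m => tendsto_const_mul_rpow_nhds_zero c hexp (hloc _ (isCompact_closedBall 0 m)))
    fun m k => ?_
  rw [← mul_add]
  exact abs_integral_le_integral_abs.trans
    (IsPowerLipschitz.integral_abs_splitting_le hH hp0 hH0 (hzk k) hz measurableSet_closedBall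
      (add_le_add_left (hzk_le k) _))

theorem stmt_10 (n : ℕ) (hn : 1 ≤ n) (p C : ℝ) (hp : 1 ≤ p) (hC : 0 < C)
    (H : ℝ → ℝ) (hH0 : H 0 = 0)
    (hH : ∀ u v : ℝ, |H u - H v| ≤ C * (|u| ^ p + |v| ^ p) * |u - v|)
    (z : EuclideanSpace ℝ (Fin n) → ℝ)
    (hz : MemLp z (ENNReal.ofReal (p + 1)) volume)
    (zk : ℕ → EuclideanSpace ℝ (Fin n) → ℝ)
    (hzk : ∀ k, MemLp (zk k) (ENNReal.ofReal (p + 1)) volume)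
    (hbdd : ∃ M : ℝ, ∀ k, (∫ x, |zk k x| ^ (p + 1)) ^ (1 / (p + 1)) ≤ M)
    (hloc : ∀ K : Set (EuclideanSpace ℝ (Fin n)), IsCompact K →
      Filter.Tendsto (fun k => ∫ x in K, |zk k x - z x| ^ (p + 1))
        Filter.atTop (nhds 0)) :
    Filter.Tendsto
      (fun k => ∫ x, (H (zk k x) - H (zk k x - z x) - H (z x)))
      Filter.atTop (nhds 0) :=
  stmt_10_general n p C hp H hH0 hH z hz zk hzk hbdd hloc
end
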